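/- Let φ be an SCNN with L layers, feature dimensions F₀,…,F_L, continuous filters, and Lipschitz continuous activation ρ. Let (A_n)_{n∈ℕ} be symmetric matrices A_n ∈ ℝ^{n×n} and W a graphon with ‖T_{W_{A_n}} − T_W‖_{L²[0,1]→L²[0,1]} → 0. Let (y_n)_n be a sequence in (L²[0,1])^{F₀} and y ∈ (L²[0,1])^{F₀} with max_{k=1,…,F₀} ‖y_n^k − y^k‖_{L²[0,1]} → 0. Then max_{j=1,…,F_L} ‖φ_{W_{A_n}}(y_n)^j − φ_W(y)^j‖_{L²[0,1]} → 0 as n → ∞. -/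

import Mathlib

open MeasureTheory Filter

noncomputable section

/-- Lebesgue measure restricted to `[0,1]`. -/
abbrev μ01 : Measure ℝ := volume.restrict (Set.Icc 0 1)

instance : IsFiniteMeasure μ01 := by
  constructor
  rw [Measure.restrict_apply_univ, Real.volume_Icc]
  exact ENNReal.ofReal_lt_top

/-- The space `L²[0,1]` (complex valued). -/
abbrev L2 := Lp ℂ 2 μ01

/-- The `j`-th interval `P_j = [j/n, (j+1)/n)` of the standard partition of `[0,1]`
(0-indexed version of `[(j-1)/n, j/n)`). -/
def part (n : ℕ) (j : Fin n) : Set ℝ := Set.Ico ((j : ℝ) / n) (((j : ℝ) + 1) / n)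

lemma part_meas (n : ℕ) (j : Fin n) : MeasurableSet (part n j) := measurableSet_Ico

lemma part_ne_top (n : ℕ) (j : Fin n) : μ01 (part n j) ≠ ⊤ := (measure_lt_top _ _).ne

/-- The graphon `W_B` induced by an `n × n` matrix `B`:
`W_B(u,v) = ∑_{i,j} B i j · 1_{P_i}(u) · 1_{P_j}(v)`. -/
def inducedGraphon {n : ℕ} (B : Matrix (Fin n) (Fin n) ℝ) : ℝ → ℝ → ℝ :=
  fun u v => ∑ i, ∑ j, B i j * (part n i).indicator 1 u * (part n j).indicator 1 v

/-- The graphon signal `ψ_x = ∑_j x_j · 1_{P_j} ∈ L²[0,1]` induced by `x ∈ ℂⁿ`. -/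
def inducedSignal {n : ℕ} (x : Fin n → ℂ) : L2 :=
  ∑ j, indicatorConstLp 2 (part_meas n j) (part_ne_top n j) (x j)

/-- `W` is a graphon: bounded, symmetric and measurable `[0,1]² → ℝ`
(realized as a function on all of `ℝ²`; only its values matter w.r.t. `μ01`). -/
structure IsGraphon (W : ℝ → ℝ → ℝ) : Prop where
  symm : ∀ u v, W u v = W v u
  meas : Measurable (Function.uncurry W)
  bdd : ∃ C, ∀ u v, |W u v| ≤ C

/-- `T` is the graphon shift operator of `W`: `(T f)(v) = ∫₀¹ W(v,u) f(u) du`. -/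
def IsGRSO (W : ℝ → ℝ → ℝ) (T : L2 →L[ℂ] L2) : Prop :=
  ∀ f : L2, ∀ᵐ v ∂μ01, T f v = ∫ u, (W v u : ℂ) * f u ∂μ01

/-- Entrywise complexification of a real activation function. -/
def rhoC (ρ : ℝ → ℝ) (z : ℂ) : ℂ := (ρ z.re : ℂ) + (ρ z.im : ℂ) * Complex.I

/-- The realization of an SCNN (filters `filt`, weights `wt`, activation `ρ`) on a graph with
GSO `Δ`: `graphNet F filt wt ρ Δ x l j` is the `j`-th feature of the `l`-th layer, on input
feature map `x`.  Layer `l+1` is obtained from layer `l` via the filters `filt l j k`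
and weights `wt l j k`. -/
def graphNet (F : ℕ → ℕ) (filt : ℕ → ℕ → ℕ → ℝ → ℝ) (wt : ℕ → ℕ → ℕ → ℝ)
    (ρ : ℝ → ℝ) {n : ℕ} (Δ : Matrix (Fin n) (Fin n) ℝ) (x : ℕ → Fin n → ℂ) :
    ℕ → ℕ → Fin n → ℂ
  | 0, j => x j
  | (l + 1), j => fun v =>
      rhoC ρ (∑ k ∈ Finset.range (F l),
        (wt l j k : ℂ) * (((cfc (filt l j k) Δ).map Complex.ofReal).mulVec
          (graphNet F filt wt ρ Δ x l k)) v)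

instance instCFCRealL2 : ContinuousFunctionalCalculus ℝ (L2 →L[ℂ] L2) IsSelfAdjoint :=
  IsSelfAdjoint.instContinuousFunctionalCalculus

/-- `y` is a realization of the SCNN (filters `filt`, weights `wt`, activation `ρ`,
`Lnum` layers, feature dimensions `F`) on the graphon shift operator `T`:
`y l j` is the `j`-th feature of the `l`-th layer, and each layer is obtained from the
previous one by filtering with `cfc (filt l j k) T`, taking weighted sums, and applying
the activation pointwise almost everywhere. -/
def IsGraphonNet (Lnum : ℕ) (F : ℕ → ℕ) (filt : ℕ → ℕ → ℕ → ℝ → ℝ) (wt : ℕ → ℕ → ℕ → ℝ)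
    (ρ : ℝ → ℝ) (T : L2 →L[ℂ] L2) (y : ℕ → ℕ → L2) : Prop :=
  ∀ l < Lnum, ∀ j < F (l + 1),
    ⇑(y (l + 1) j) =ᵐ[μ01]
      fun v => rhoC ρ
        (((∑ k ∈ Finset.range (F l),
          (wt l j k : ℂ) • (cfc (filt l j k) T) (y l k) : L2) : ℝ → ℂ) v)

/-! Graphon shift operators have symmetric kernels, so they are self-adjoint and the continuous
functional calculus applies to them; on self-adjoint elements `a ↦ h(a)` is continuous in norm.
Hence every filtered feature `h(T_n) Y_n` converges to `h(T_W) Z`, weighted sums preserve this,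
and the pointwise activation is Lipschitz on `L²`, so induction over the layers carries the
convergence from the inputs to the outputs. -/

open scoped ComplexConjugate InnerProductSpace Topology

section SymmetricKernel

variable {α : Type*} [MeasurableSpace α] {μ : Measure α} [IsFiniteMeasure μ] {K : α → α → ℝ}

theorem integrable_kernel_mul_conj_mul (hK : Measurable (Function.uncurry K)) {C : ℝ}
    (hC : ∀ u v, |K u v| ≤ C) (f g : Lp ℂ 2 μ) :
    Integrable (fun p : α × α => (K p.1 p.2 : ℂ) * (conj (f p.2) * g p.1)) (μ.prod μ) := by
  have hf : Integrable f μ := (Lp.memLp f).integrable (by norm_num)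
  have hg : Integrable g μ := (Lp.memLp g).integrable (by norm_num)
  refine ((hg.norm.mul_prod hf.norm).const_mul C).mono' ?_ (Eventually.of_forall fun p => ?_)
  · exact (Complex.measurable_ofReal.comp hK).aestronglyMeasurable.mul
      ((Complex.continuous_conj.comp_aestronglyMeasurable (Lp.aestronglyMeasurable f).comp_snd).mul
        (Lp.aestronglyMeasurable g).comp_fst)
  · simp only [norm_mul, Complex.norm_real, Real.norm_eq_abs, RCLike.norm_conj]
    rw [mul_comm ‖f p.2‖]
    exact mul_le_mul_of_nonneg_right (hC _ _) (by positivity)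

theorem isSelfAdjoint_of_ae_eq_integral_kernel (hsymm : ∀ u v, K u v = K v u)
    (hK : Measurable (Function.uncurry K)) {C : ℝ} (hC : ∀ u v, |K u v| ≤ C)
    {T : Lp ℂ 2 μ →L[ℂ] Lp ℂ 2 μ} (hT : ∀ f, ∀ᵐ v ∂μ, T f v = ∫ u, (K v u : ℂ) * f u ∂μ) :
    IsSelfAdjoint T := by
  rw [ContinuousLinearMap.isSelfAdjoint_iff_isSymmetric]
  intro f g
  calc ⟪T f, g⟫_ℂ = ∫ v, ∫ u, (K v u : ℂ) * (conj (f u) * g v) ∂μ ∂μ := by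
        rw [L2.inner_def]
        refine integral_congr_ae ((hT f).mono fun v hv => ?_)
        simp only [RCLike.inner_apply', hv, ← integral_conj, ← integral_mul_const, map_mul,
          Complex.conj_ofReal]
        exact integral_congr_ae (Eventually.of_forall fun _ => by ring)
    _ = ∫ u, ∫ v, (K v u : ℂ) * (conj (f u) * g v) ∂μ ∂μ :=
        integral_integral_swap (integrable_kernel_mul_conj_mul hK hC f g)
    _ = ⟪f, T g⟫_ℂ := by
        rw [L2.inner_def]
        refine integral_congr_ae ((hT g).mono fun u hu => ?_)
        simp only [RCLike.inner_apply', hu, ← integral_const_mul, hsymm _ u]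
        exact integral_congr_ae (Eventually.of_forall fun _ => by ring)

end SymmetricKernel

theorem IsGraphon.isSelfAdjoint {W : ℝ → ℝ → ℝ} (hW : IsGraphon W) {T : L2 →L[ℂ] L2}
    (hT : IsGRSO W T) : IsSelfAdjoint T :=
  let ⟨_, hC⟩ := hW.bdd
  isSelfAdjoint_of_ae_eq_integral_kernel hW.symm hW.meas hC hT

theorem isGraphon_inducedGraphon {n : ℕ} {B : Matrix (Fin n) (Fin n) ℝ} (hB : B.IsSymm) :
    IsGraphon (inducedGraphon B) where
  symm u v := by
    unfold inducedGraphon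
    rw [Finset.sum_comm]
    refine Finset.sum_congr rfl fun i _ => Finset.sum_congr rfl fun j _ => ?_
    rw [hB.apply j i]
    ring
  meas := by
    unfold inducedGraphon
    fun_prop (disch := exact part_meas n _)
  bdd := by
    refine ⟨∑ i, ∑ j, |B i j|, fun u v => ?_⟩
    have hind : ∀ (i : Fin n) (x : ℝ), |(part n i).indicator (1 : ℝ → ℝ) x| ≤ 1 := fun i x => by
      simpa using norm_indicator_le_norm_self (s := part n i) (1 : ℝ → ℝ) x
    unfold inducedGraphon
    refine (Finset.abs_sum_le_sum_abs _ _).trans (Finset.sum_le_sum fun i _ =>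
      (Finset.abs_sum_le_sum_abs _ _).trans (Finset.sum_le_sum fun j _ => ?_))
    rw [abs_mul, abs_mul]
    calc |B i j| * _ * _ ≤ |B i j| * 1 * 1 := by gcongr <;> exact hind _ _
      _ = |B i j| := by ring

theorem Filter.Tendsto.cfc_of_isSelfAdjoint {ι A : Type*} [NormedRing A] [StarRing A]
    [NormedAlgebra ℝ A] [IsometricContinuousFunctionalCalculus ℝ A IsSelfAdjoint]
    [ContinuousStar A] [CompleteSpace A] {f : ℝ → ℝ} (hf : Continuous f) {l : Filter ι}
    {a : ι → A} {a₀ : A} (h : Tendsto a l (𝓝 a₀)) (ha : ∀ i, IsSelfAdjoint (a i))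
    (ha₀ : IsSelfAdjoint a₀) : Tendsto (fun i => cfc f (a i)) l (𝓝 (cfc f a₀)) := by
  have hcont : ContinuousOn (cfc f : A → A) {a | IsSelfAdjoint a} :=
    ContinuousOn.cfc_of_mem_nhdsSet f (a := id) univ_mem continuousOn_id (fun _ h => h)
      hf.continuousOn
  exact (hcont.continuousWithinAt ha₀).tendsto.comp
    (tendsto_nhdsWithin_iff.mpr ⟨h, Eventually.of_forall ha⟩)

theorem lipschitzWith_rhoC {ρ : ℝ → ℝ} {K : NNReal} (hρ : LipschitzWith K ρ) :
    LipschitzWith (K + K) (rhoC ρ) := by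
  have hre : LipschitzWith 1 Complex.re := Complex.reCLM.lipschitz.weaken (by simp)
  have him : LipschitzWith 1 Complex.im := Complex.imCLM.lipschitz.weaken (by simp)
  have hmulI : LipschitzWith 1 fun r : ℝ => (r : ℂ) * Complex.I :=
    LipschitzWith.of_dist_le_mul fun a b => by
      simp [dist_eq_norm, ← sub_mul, ← Complex.ofReal_sub, Complex.norm_real]
  have h := (Complex.isometry_ofReal.lipschitz.comp (hρ.comp hre)).add (hmulI.comp (hρ.comp him))
  simp only [one_mul, mul_one] at h
  exact h

theorem Lp.norm_sub_le_of_ae_eq_comp {α E F : Type*} [MeasurableSpace α] {μ : Measure α}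
    {p : ENNReal} [NormedAddCommGroup E] [NormedAddCommGroup F] {φ : E → F} {K : NNReal}
    (hφ : LipschitzWith K φ) {g h : Lp E p μ} {y z : Lp F p μ}
    (hy : y =ᵐ[μ] fun x => φ (g x)) (hz : z =ᵐ[μ] fun x => φ (h x)) :
    ‖y - z‖ ≤ K * ‖g - h‖ := by
  refine Lp.norm_le_mul_norm_of_ae_le_mul ?_
  filter_upwards [hy, hz, Lp.coeFn_sub y z, Lp.coeFn_sub g h] with x hyx hzx hyz hgh
  rw [hyz, hgh, Pi.sub_apply, Pi.sub_apply, hyx, hzx, ← dist_eq_norm, ← dist_eq_norm]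
  exact hφ.dist_le_mul _ _

theorem Lp.tendsto_of_ae_eq_comp {α E F ι : Type*} [MeasurableSpace α] {μ : Measure α}
    {p : ENNReal} [Fact (1 ≤ p)] [NormedAddCommGroup E] [NormedAddCommGroup F] {φ : E → F}
    {K : NNReal} (hφ : LipschitzWith K φ) {l : Filter ι} {g : ι → Lp E p μ} {g₀ : Lp E p μ}
    {y : ι → Lp F p μ} {y₀ : Lp F p μ} (hy : ∀ i, y i =ᵐ[μ] fun x => φ (g i x))
    (hy₀ : y₀ =ᵐ[μ] fun x => φ (g₀ x)) (hg : Tendsto g l (𝓝 g₀)) : Tendsto y l (𝓝 y₀) := by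
  rw [tendsto_iff_norm_sub_tendsto_zero] at hg ⊢
  refine squeeze_zero (fun _ => norm_nonneg _)
    (fun i => Lp.norm_sub_le_of_ae_eq_comp hφ (hy i) hy₀) ?_
  simpa using hg.const_mul (K : ℝ)

/-- Asymptotic transferability of SCNNs realized on graphons: if the induced
graphon shift operators `T_{W_{A n}}` converge in operator norm to `T_W` and the input
graphon feature maps `y n` converge to `y` featurewise in `L²[0,1]`, then the outputs of
the SCNN realized on `W_{A n}` converge featurewise to the output of the SCNN realized on
`W`. -/
theorem statement14 (Lnum : ℕ) (F : ℕ → ℕ)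
    (filt : ℕ → ℕ → ℕ → ℝ → ℝ) (hfilt : ∀ l j k, Continuous (filt l j k))
    (wt : ℕ → ℕ → ℕ → ℝ)
    (ρ : ℝ → ℝ) (Kρ : NNReal) (hρ : LipschitzWith Kρ ρ)
    (A : (n : ℕ) → Matrix (Fin n) (Fin n) ℝ) (hA : ∀ n, (A n).IsSymm)
    (W : ℝ → ℝ → ℝ) (hW : IsGraphon W)
    (T : (n : ℕ) → L2 →L[ℂ] L2) (hT : ∀ n, IsGRSO (inducedGraphon (A n)) (T n))
    (TW : L2 →L[ℂ] L2) (hTW : IsGRSO W TW)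
    (hconv : Tendsto (fun n => ‖T n - TW‖) atTop (nhds 0))
    (y : ℕ → ℕ → L2) (z : ℕ → L2)
    (hyz : ∀ k < F 0, Tendsto (fun n => ‖y n k - z k‖) atTop (nhds 0))
    (Y : ℕ → ℕ → ℕ → L2) (hY : ∀ n, IsGraphonNet Lnum F filt wt ρ (T n) (Y n))
    (hY0 : ∀ n, ∀ k < F 0, Y n 0 k = y n k)
    (Z : ℕ → ℕ → L2) (hZ : IsGraphonNet Lnum F filt wt ρ TW Z)
    (hZ0 : ∀ k < F 0, Z 0 k = z k) :
    ∀ j < F Lnum, Tendsto (fun n => ‖Y n Lnum j - Z Lnum j‖) atTop (nhds 0) := by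
  have hTconv : Tendsto T atTop (𝓝 TW) := tendsto_iff_norm_sub_tendsto_zero.mpr hconv
  have hTsa n : IsSelfAdjoint (T n) := (isGraphon_inducedGraphon (hA n)).isSelfAdjoint (hT n)
  have hTWsa : IsSelfAdjoint TW := hW.isSelfAdjoint hTW
  suffices H : ∀ l ≤ Lnum, ∀ j < F l, Tendsto (fun n => Y n l j) atTop (𝓝 (Z l j)) from
    fun j hj => tendsto_iff_norm_sub_tendsto_zero.mp (H Lnum le_rfl j hj)
  intro l
  induction l with
  | zero =>
    intro _ j hj
    simpa only [hY0 _ j hj, hZ0 j hj] using tendsto_iff_norm_sub_tendsto_zero.mpr (hyz j hj)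
  | succ l ih =>
    intro hl j hj
    have hfilter k (hk : k < F l) : Tendsto (fun n => cfc (filt l j k) (T n) (Y n l k)) atTop
        (𝓝 (cfc (filt l j k) TW (Z l k))) :=
      (isBoundedBilinearMap_apply.continuous.tendsto _).comp
        ((hTconv.cfc_of_isSelfAdjoint (hfilt l j k) hTsa hTWsa).prodMk_nhds
          (ih (Nat.le_of_succ_le hl) k hk))
    refine Lp.tendsto_of_ae_eq_comp (lipschitzWith_rhoC hρ) (fun n => hY n l hl j hj)
      (hZ l hl j hj) (tendsto_finsetSum _ fun k hk => ?_)
    exact (hfilter k (Finset.mem_range.mp hk)).const_smul _
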